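/- arXiv:1904.09574 — 2 statements merged into one kernel-verified Lean document; each statement's English description precedes it below -/
import Mathlib

section
/- Suppose G ∈ C²([0,T)) satisfies G''(t) + a(t)G'(t) + b(t)G(t) = F(t) with F ≥ 0 continuous, G(0) ≥ 0, and G'(0) + r₂(0)G(0) ≥ 0, where r₁, r₂ ∈ L¹([0,∞)) solve r₁ + r₂ = a and r₂' + r₁ r₂ = b. Then for all t ∈ [0,T), G(t) ≥ e^{−‖r₁‖_{L¹} − ‖r₂‖_{L¹}} ∫₀^t ∫₀^{s₂} F(s₁) ds₁ ds₂. -/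
/-!
The operator factors as `G'' + a G' + b G = (d/dt + r₁)(G' + r₂ G)`. A first-order inequality
`u' + r u ≥ g ≥ 0`, `u(0) ≥ 0` gives `u(t) ≥ e^{-‖r‖₁} ∫₀ᵗ g`: multiply by the integrating factor
`e^{R}`, `R = ∫₀ r`, integrate, and use `R(s) ≥ R(t) - ‖r‖₁`. Applying this first to `G' + r₂ G`
with `r = r₁`, `g = F`, and then to `G` with `r = r₂`, yields the double integral.
-/

open Set MeasureTheory intervalIntegral Real Topology

theorem integral_exp_mul_le_of_le_deriv_add_mul {R r u u' g : ℝ → ℝ} {a c : ℝ} (hac : a ≤ c)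
    (hR : ContinuousOn R (Icc a c)) (hR' : ∀ x ∈ Ioo a c, HasDerivAt R (r x) x)
    (hu : ContinuousOn u (Icc a c)) (hu' : ∀ x ∈ Ioo a c, HasDerivAt u (u' x) x)
    (hg : IntervalIntegrable g volume a c) (hgu : ∀ x ∈ Ioo a c, g x ≤ u' x + r x * u x) :
    ∫ x in a..c, exp (R x) * g x ≤ exp (R c) * u c - exp (R a) * u a := by
  refine integral_le_sub_of_hasDeriv_right_of_le hac (hR.rexp.mul hu)
    (fun x hx => ((hR' x hx).exp.mul (hu' x hx)).hasDerivWithinAt) ?_ fun x hx => ?_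
  · rw [← intervalIntegrable_iff_integrableOn_Icc_of_le hac]
    exact hg.continuousOn_mul (by rw [uIcc_of_le hac]; exact hR.rexp)
  · calc exp (R x) * g x ≤ exp (R x) * (u' x + r x * u x) := by gcongr; exact hgu x hx
      _ = exp (R x) * r x * u x + exp (R x) * u' x := by ring

theorem abs_intervalIntegral_le_integral_Ici_abs {r : ℝ → ℝ} {a s c : ℝ}
    (hr : IntegrableOn r (Ici a)) (has : a ≤ s) (hsc : s ≤ c) :
    |∫ x in s..c, r x| ≤ ∫ x in Ici a, |r x| := by
  refine (abs_integral_le_integral_abs hsc).trans ?_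
  rw [integral_of_le hsc]
  exact setIntegral_mono_set hr.abs (ae_of_all _ fun _ => abs_nonneg _)
    (ae_of_all _ fun x hx => has.trans hx.1.le)

theorem exp_neg_integral_abs_mul_integral_le {r u u' g : ℝ → ℝ} {a c : ℝ} (hac : a ≤ c)
    (hr : IntegrableOn r (Ici a)) (hr_cont : ContinuousOn r (Icc a c))
    (hu : ContinuousOn u (Icc a c)) (hu' : ∀ x ∈ Ioo a c, HasDerivAt u (u' x) x)
    (hg : IntervalIntegrable g volume a c) (hg0 : ∀ x ∈ Icc a c, 0 ≤ g x)
    (hgu : ∀ x ∈ Ioo a c, g x ≤ u' x + r x * u x) (hu0 : 0 ≤ u a) :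
    exp (-∫ x in Ici a, |r x|) * ∫ x in a..c, g x ≤ u c := by
  set K := ∫ x in Ici a, |r x|
  set R : ℝ → ℝ := fun x => ∫ y in a..x, r y
  have hr_int : ∀ x ∈ Icc a c, IntervalIntegrable r volume a x := fun x hx =>
    (hr_cont.mono (by rw [uIcc_of_le hx.1]; exact Icc_subset_Icc_right hx.2)).intervalIntegrable
  have hR : ContinuousOn R (Icc a c) := by
    have := continuousOn_primitive_interval (μ := volume)
      (by rw [uIcc_of_le hac]; exact hr_cont.integrableOn_Icc)
    rwa [uIcc_of_le hac] at this
  have hR' : ∀ x ∈ Ioo a c, HasDerivAt R (r x) x := fun x hx =>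
    integral_hasDerivAt_right (hr_int x (Ioo_subset_Icc_self hx))
      ((hr_cont.mono Ioo_subset_Icc_self).stronglyMeasurableAtFilter (μ := volume) isOpen_Ioo x hx)
      (hr_cont.continuousAt (Icc_mem_nhds hx.1 hx.2))
  have hR_ge : ∀ x ∈ Icc a c, R c - K ≤ R x := fun x hx => by
    have hdiff : R c - R x = ∫ y in x..c, r y :=
      integral_interval_sub_left (hr_int c (right_mem_Icc.2 hac)) (hr_int x hx)
    linarith [le_abs_self (∫ y in x..c, r y),
      abs_intervalIntegral_le_integral_Ici_abs hr hx.1 hx.2]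
  have hupper := integral_exp_mul_le_of_le_deriv_add_mul hac hR hR' hu hu' hg hgu
  have hlower : exp (R c - K) * ∫ x in a..c, g x ≤ ∫ x in a..c, exp (R x) * g x := by
    rw [← intervalIntegral.integral_const_mul]
    refine integral_mono_on hac (hg.const_mul _)
      (hg.continuousOn_mul (by rw [uIcc_of_le hac]; exact hR.rexp)) fun x hx => ?_
    gcongr
    exacts [hg0 x hx, hR_ge x hx]
  have hRa : R a = 0 := integral_same
  rw [hRa, exp_zero, one_mul] at hupper
  rw [sub_eq_add_neg, exp_add, mul_assoc] at hlower
  exact le_of_mul_le_mul_left (by linarith) (exp_pos (R c))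

theorem exp_neg_mul_iterated_integral_le_of_factored_ode {r₁ r₂ r₂' F G G' G'' : ℝ → ℝ} {t₀ t : ℝ}
    (ht : t₀ ≤ t) (hr₁ : IntegrableOn r₁ (Ici t₀)) (hr₂ : IntegrableOn r₂ (Ici t₀))
    (hr₁_cont : ContinuousOn r₁ (Icc t₀ t)) (hr₂' : ∀ x ∈ Icc t₀ t, HasDerivAt r₂ (r₂' x) x)
    (hG : ContinuousOn G (Icc t₀ t)) (hG' : ContinuousOn G' (Icc t₀ t))
    (hGd : ∀ x ∈ Ioo t₀ t, HasDerivAt G (G' x) x)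
    (hG'd : ∀ x ∈ Ioo t₀ t, HasDerivAt G' (G'' x) x)
    (hF : IntegrableOn F (Icc t₀ t)) (hF0 : ∀ x ∈ Icc t₀ t, 0 ≤ F x)
    (heq : ∀ x ∈ Ioo t₀ t,
      G'' x + (r₁ x + r₂ x) * G' x + (r₂' x + r₁ x * r₂ x) * G x = F x)
    (hG0 : 0 ≤ G t₀) (hG'0 : 0 ≤ G' t₀ + r₂ t₀ * G t₀) :
    exp (-(∫ x in Ici t₀, |r₁ x|) - ∫ x in Ici t₀, |r₂ x|) *
      ∫ s in t₀..t, ∫ x in t₀..s, F x ≤ G t := by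
  have hr₂_cont : ContinuousOn r₂ (Icc t₀ t) := fun x hx =>
    (hr₂' x hx).continuousAt.continuousWithinAt
  have hF_prim : ContinuousOn (fun s => ∫ x in t₀..s, F x) (Icc t₀ t) := by
    have := continuousOn_primitive_interval (a := t₀) (b := t) (by rwa [uIcc_of_le ht])
    rwa [uIcc_of_le ht] at this
  have hw : ∀ s ∈ Icc t₀ t, exp (-∫ x in Ici t₀, |r₁ x|) * ∫ x in t₀..s, F x ≤
      G' s + r₂ s * G s := fun s hs => by
    have hsub : Icc t₀ s ⊆ Icc t₀ t := Icc_subset_Icc_right hs.2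
    have hsub' : Ioo t₀ s ⊆ Ioo t₀ t := Ioo_subset_Ioo_right hs.2
    refine exp_neg_integral_abs_mul_integral_le (u := fun x => G' x + r₂ x * G x)
      (u' := fun x => G'' x + (r₂' x * G x + r₂ x * G' x)) hs.1 hr₁ (hr₁_cont.mono hsub)
      ((hG'.add (hr₂_cont.mul hG)).mono hsub)
      (fun x hx => (hG'd x (hsub' hx)).add ((hr₂' x (hsub (Ioo_subset_Icc_self hx))).mul
        (hGd x (hsub' hx))))
      ((intervalIntegrable_iff_integrableOn_Icc_of_le hs.1).2 (hF.mono_set hsub))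
      (fun x hx => hF0 x (hsub hx))
      (fun x hx => le_of_eq ?_) hG'0
    linear_combination (heq x (hsub' hx)).symm
  have hG_bound := exp_neg_integral_abs_mul_integral_le
    (g := fun s => exp (-∫ x in Ici t₀, |r₁ x|) * ∫ x in t₀..s, F x) ht hr₂ hr₂_cont hG hGd
    ((continuousOn_const.mul hF_prim).intervalIntegrable_of_Icc ht)
    (fun s hs => mul_nonneg (exp_pos _).le
      (integral_nonneg hs.1 fun x hx => hF0 x ⟨hx.1, hx.2.trans hs.2⟩))
    (fun x hx => hw x (Ioo_subset_Icc_self hx)) hG0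
  rwa [intervalIntegral.integral_const_mul, ← mul_assoc, ← exp_add, add_comm,
    ← sub_eq_add_neg] at hG_bound

theorem double_multiplier_lower_bound_general (T : ℝ)
    (a b r₁ r₂ r₂' F G G' G'' : ℝ → ℝ)
    (ha : ContDiff ℝ 1 a)
    (hr₂ : ∀ t : ℝ, 0 ≤ t → HasDerivAt r₂ (r₂' t) t)
    (hsys1 : ∀ t : ℝ, 0 ≤ t → r₁ t + r₂ t = a t)
    (hsys2 : ∀ t : ℝ, 0 ≤ t → r₂' t + r₁ t * r₂ t = b t)
    (hr₁_int : IntegrableOn r₁ (Ici 0))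
    (hr₂_int : IntegrableOn r₂ (Ici 0))
    (hF_cont : ContinuousOn F (Ico 0 T)) (hF_nonneg : ∀ t ∈ Ico (0 : ℝ) T, 0 ≤ F t)
    (hG : ∀ t ∈ Ico (0 : ℝ) T, HasDerivWithinAt G (G' t) (Ico 0 T) t)
    (hG' : ∀ t ∈ Ico (0 : ℝ) T, HasDerivWithinAt G' (G'' t) (Ico 0 T) t)
    (heq : ∀ t ∈ Ico (0 : ℝ) T, G'' t + a t * G' t + b t * G t = F t)
    (hG0 : 0 ≤ G 0) (hG'0 : 0 ≤ G' 0 + r₂ 0 * G 0) :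
    ∀ t ∈ Ico (0 : ℝ) T,
      G t ≥ Real.exp (-(∫ τ in Ici (0 : ℝ), |r₁ τ|) - (∫ τ in Ici (0 : ℝ), |r₂ τ|)) *
        ∫ s₂ in (0 : ℝ)..t, ∫ s₁ in (0 : ℝ)..s₂, F s₁ := by
  intro t ht
  have hsub : Icc 0 t ⊆ Ico 0 T := Icc_subset_Ico_right ht.2
  have hnhds : ∀ x ∈ Ioo 0 t, Ico 0 T ∈ 𝓝 x := fun x hx => Ico_mem_nhds hx.1 (hx.2.trans ht.2)
  have hr₁_cont : ContinuousOn r₁ (Icc 0 t) :=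
    (ha.continuous.continuousOn.sub fun x hx => (hr₂ x hx.1).continuousAt.continuousWithinAt
      ).congr fun x hx => eq_sub_of_add_eq (hsys1 x hx.1)
  refine exp_neg_mul_iterated_integral_le_of_factored_ode ht.1 hr₁_int hr₂_int hr₁_cont
    (fun x hx => hr₂ x hx.1)
    (fun x hx => (hG x (hsub hx)).continuousWithinAt.mono hsub)
    (fun x hx => (hG' x (hsub hx)).continuousWithinAt.mono hsub)
    (fun x hx => (hG x (hsub (Ioo_subset_Icc_self hx))).hasDerivAt (hnhds x hx))
    (fun x hx => (hG' x (hsub (Ioo_subset_Icc_self hx))).hasDerivAt (hnhds x hx))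
    (hF_cont.mono hsub).integrableOn_Icc (fun x hx => hF_nonneg x (hsub hx)) (fun x hx => ?_)
    hG0 hG'0
  rw [hsys1 x hx.1.le, hsys2 x hx.1.le]
  exact heq x (hsub (Ioo_subset_Icc_self hx))

theorem double_multiplier_lower_bound (T : ℝ) (hT : 0 < T)
    (a b r₁ r₂ r₂' F G G' G'' : ℝ → ℝ)
    (ha : ContDiff ℝ 1 a) (hb : Continuous b)
    (hr₂ : ∀ t : ℝ, 0 ≤ t → HasDerivAt r₂ (r₂' t) t)
    (hsys1 : ∀ t : ℝ, 0 ≤ t → r₁ t + r₂ t = a t)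
    (hsys2 : ∀ t : ℝ, 0 ≤ t → r₂' t + r₁ t * r₂ t = b t)
    (hr₁_int : IntegrableOn r₁ (Ici 0))
    (hr₂_int : IntegrableOn r₂ (Ici 0))
    (hF_cont : ContinuousOn F (Ico 0 T)) (hF_nonneg : ∀ t ∈ Ico (0 : ℝ) T, 0 ≤ F t)
    (hG : ∀ t ∈ Ico (0 : ℝ) T, HasDerivWithinAt G (G' t) (Ico 0 T) t)
    (hG' : ∀ t ∈ Ico (0 : ℝ) T, HasDerivWithinAt G' (G'' t) (Ico 0 T) t)
    (heq : ∀ t ∈ Ico (0 : ℝ) T, G'' t + a t * G' t + b t * G t = F t)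
    (hG0 : 0 ≤ G 0) (hG'0 : 0 ≤ G' 0 + r₂ 0 * G 0) :
    ∀ t ∈ Ico (0 : ℝ) T,
      G t ≥ Real.exp (-(∫ τ in Ici (0 : ℝ), |r₁ τ|) - (∫ τ in Ici (0 : ℝ), |r₂ τ|)) *
        ∫ s₂ in (0 : ℝ)..t, ∫ s₁ in (0 : ℝ)..s₂, F s₁ :=
  double_multiplier_lower_bound_general T a b r₁ r₂ r₂' F G G' G'' ha hr₂ hsys1 hsys2 hr₁_int
    hr₂_int hF_cont hF_nonneg hG hG' heq hG0 hG'0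
end

section
/- Let a ∈ L¹([0,∞)) be continuous and ρ, G₁ : [0,T) → ℝ with ρ > 0 differentiable. If G₁ is differentiable and satisfies G₁'(t) + (a(t) − 2ρ'(t)/ρ(t)) G₁(t) ≥ ε C for all t, with G₁(0) ≥ 0, ε > 0, C > 0, then G₁(t) ≥ ε C e^{−‖a‖_{L¹}} ρ(t)² ∫₀^t ρ(s)^{−2} ds for all t ∈ [0,T). -/
open Set MeasureTheory intervalIntegral

theorem G1_lower_bound (T ε C : ℝ) (hT : 0 < T) (hε : 0 < ε) (hC : 0 < C)
    (a ρ ρ' G₁ G₁' : ℝ → ℝ)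
    (ha_cont : Continuous a) (ha_int : IntegrableOn a (Ici 0))
    (hρ_pos : ∀ t ∈ Ico (0 : ℝ) T, 0 < ρ t)
    (hρ : ∀ t ∈ Ico (0 : ℝ) T, HasDerivWithinAt ρ (ρ' t) (Ico 0 T) t)
    (hρ'_cont : ContinuousOn ρ' (Ico 0 T))
    (hG₁ : ∀ t ∈ Ico (0 : ℝ) T, HasDerivWithinAt G₁ (G₁' t) (Ico 0 T) t)
    (hineq : ∀ t ∈ Ico (0 : ℝ) T,
      G₁' t + (a t - 2 * ρ' t / ρ t) * G₁ t ≥ ε * C)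
    (hG₁0 : 0 ≤ G₁ 0) :
    ∀ t ∈ Ico (0 : ℝ) T,
      G₁ t ≥ ε * C * Real.exp (-(∫ τ in Ici (0 : ℝ), |a τ|)) * ρ t ^ 2 *
        ∫ s in (0 : ℝ)..t, (ρ s) ^ (-2 : ℤ) := by
  intro t ht
  obtain ⟨ht0, htT⟩ := ht
  set K : ℝ := ∫ τ in Ici (0 : ℝ), |a τ| with hK
  set B : ℝ → ℝ := fun s => ∫ τ in (0:ℝ)..s, a τ with hBdef
  have hB : ∀ s, HasDerivAt B (a s) s := fun s =>
    integral_hasDerivAt_right (ha_cont.intervalIntegrable _ _)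
      ha_cont.stronglyMeasurable.stronglyMeasurableAtFilter ha_cont.continuousAt
  -- E s := exp (B s - B t)
  set E : ℝ → ℝ := fun s => Real.exp (B s - B t) with hEdef
  have hE : ∀ s, HasDerivAt E (Real.exp (B s - B t) * a s) s := fun s =>
    ((hB s).sub_const (B t)).exp
  have hIcc_sub : Icc 0 t ⊆ Ico 0 T := fun x hx => ⟨hx.1, lt_of_le_of_lt hx.2 htT⟩
  -- lower bound on E on [0, t]
  have hEK : ∀ s ∈ Icc (0:ℝ) t, Real.exp (-K) ≤ E s := by
    intro s hs
    apply Real.exp_le_exp.mpr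
    have hs0 := hs.1; have hst := hs.2
    have hsub : B t - B s = ∫ τ in s..t, a τ := by
      rw [hBdef]
      simp only
      rw [← intervalIntegral.integral_add_adjacent_intervals
        (ha_cont.intervalIntegrable 0 s) (ha_cont.intervalIntegrable s t)]
      ring
    have h1 : |∫ τ in s..t, a τ| ≤ ∫ τ in s..t, |a τ| :=
      intervalIntegral.abs_integral_le_integral_abs hst
    have h2 : (∫ τ in s..t, |a τ|) ≤ K := by
      rw [intervalIntegral.integral_of_le hst, hK]
      apply setIntegral_mono_set ha_int.abs
      · exact ae_of_all _ fun x => abs_nonneg _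
      · exact HasSubset.Subset.eventuallyLE (fun x hx => le_trans hs0 hx.1.le)
    have : B t - B s ≤ K := hsub ▸ le_trans (le_abs_self _) (le_trans h1 h2)
    linarith
  -- primitive J of ρ⁻²
  have hρ_cont : ContinuousOn ρ (Ico 0 T) := fun x hx => (hρ x hx).continuousWithinAt
  have hρinv_cont : ContinuousOn (fun s => (ρ s ^ 2)⁻¹) (Ico 0 T) :=
    ((hρ_cont.pow 2).inv₀ (fun x hx => by have := hρ_pos x hx; exact pow_ne_zero 2 this.ne'))
  set J : ℝ → ℝ := fun s => ∫ u in (0:ℝ)..s, (ρ u ^ 2)⁻¹ with hJdef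
  have hJint : IntegrableOn (fun s => (ρ s ^ 2)⁻¹) (Icc 0 t) :=
    (hρinv_cont.mono hIcc_sub).integrableOn_compact isCompact_Icc
  have hJ_cont : ContinuousOn J (Icc 0 t) := by
    have := intervalIntegral.continuousOn_primitive_interval
      (f := fun s => (ρ s ^ 2)⁻¹) (μ := volume) (a := 0) (b := t)
      (by rwa [uIcc_of_le ht0])
    rwa [uIcc_of_le ht0] at this
  have hJ' : ∀ s ∈ Ioo (0:ℝ) t, HasDerivAt J ((ρ s ^ 2)⁻¹) s := by
    intro s hs
    have hsI : s ∈ Ico (0:ℝ) T := hIcc_sub ⟨hs.1.le, hs.2.le⟩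
    have hmem : Ico (0:ℝ) T ∈ nhds s :=
      Ico_mem_nhds (by linarith [hs.1]) (by linarith [hs.2])
    apply integral_hasDerivAt_right
    · apply ContinuousOn.intervalIntegrable
      have hsub : uIcc (0:ℝ) s ⊆ Ico 0 T := by
        rw [uIcc_of_le hs.1.le]
        exact fun x hx => hIcc_sub ⟨hx.1, le_trans hx.2 hs.2.le⟩
      exact hρinv_cont.mono hsub
    · exact ⟨Ico 0 T, hmem, (hρinv_cont.mono subset_rfl).aestronglyMeasurable measurableSet_Ico⟩
    · exact hρinv_cont.continuousAt hmem
  -- the function Φ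
  set F : ℝ → ℝ := fun s => G₁ s * E s / ρ s ^ 2 with hFdef
  set Φ : ℝ → ℝ := fun s => F s - ε * C * Real.exp (-K) * J s with hΦdef
  have hG₁_cont : ContinuousOn G₁ (Ico 0 T) := fun x hx => (hG₁ x hx).continuousWithinAt
  have hE_cont : Continuous E :=
    continuous_iff_continuousAt.mpr fun s => (hE s).continuousAt
  have hF_cont : ContinuousOn F (Ico 0 T) := by
    apply ContinuousOn.div (hG₁_cont.mul hE_cont.continuousOn)
      (hρ_cont.pow 2)
    intro x hx; have := hρ_pos x hx; exact pow_ne_zero 2 this.ne'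
  have hΦ_cont : ContinuousOn Φ (Icc 0 t) :=
    (hF_cont.mono hIcc_sub).sub (continuousOn_const.mul hJ_cont)
  have hΦmono : MonotoneOn Φ (Icc 0 t) := by
    apply monotoneOn_of_hasDerivWithinAt_nonneg (convex_Icc 0 t) hΦ_cont
      (f' := fun s =>
        ((G₁' s * E s + G₁ s * (Real.exp (B s - B t) * a s)) * ρ s ^ 2 -
          G₁ s * E s * (2 * ρ s ^ 1 * ρ' s)) / (ρ s ^ 2) ^ 2
        - ε * C * Real.exp (-K) * (ρ s ^ 2)⁻¹)
    all_goals
      intro s hs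
      rw [interior_Icc] at hs
    · have hsI : s ∈ Ico (0:ℝ) T := hIcc_sub ⟨hs.1.le, hs.2.le⟩
      have hρs := hρ_pos s hsI
      have hd1 : HasDerivWithinAt F
          (((G₁' s * E s + G₁ s * (Real.exp (B s - B t) * a s)) * ρ s ^ 2 -
            G₁ s * E s * (2 * ρ s ^ 1 * ρ' s)) / (ρ s ^ 2) ^ 2) (Ioo 0 t) s := by
        apply HasDerivWithinAt.div
        · exact ((hG₁ s hsI).mono (fun x hx => hIcc_sub ⟨hx.1.le, hx.2.le⟩)).mul
            ((hE s).hasDerivWithinAt)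
        · exact ((hρ s hsI).mono (fun x hx => hIcc_sub ⟨hx.1.le, hx.2.le⟩)).pow 2
        · positivity
      rw [interior_Icc]
      exact (hd1.sub (((hJ' s hs).hasDerivWithinAt).const_mul (ε * C * Real.exp (-K))))
    · have hsI : s ∈ Ico (0:ℝ) T := hIcc_sub ⟨hs.1.le, hs.2.le⟩
      have hρs := hρ_pos s hsI
      have hEpos : 0 < E s := Real.exp_pos _
      have hEKs : Real.exp (-K) ≤ E s := hEK s ⟨hs.1.le, hs.2.le⟩
      have key : ((G₁' s * E s + G₁ s * (Real.exp (B s - B t) * a s)) * ρ s ^ 2 -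
          G₁ s * E s * (2 * ρ s ^ 1 * ρ' s)) / (ρ s ^ 2) ^ 2
          = (G₁' s + (a s - 2 * ρ' s / ρ s) * G₁ s) * (E s / ρ s ^ 2) := by
        rw [hEdef]; field_simp; ring
      rw [key]
      have h1 : ε * C ≤ G₁' s + (a s - 2 * ρ' s / ρ s) * G₁ s := hineq s hsI
      have h2 : Real.exp (-K) / ρ s ^ 2 ≤ E s / ρ s ^ 2 := by
        apply div_le_div_of_nonneg_right hEKs
        positivity
      have h3 : ε * C * (Real.exp (-K) / ρ s ^ 2) ≤
          (G₁' s + (a s - 2 * ρ' s / ρ s) * G₁ s) * (E s / ρ s ^ 2) := by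
        apply mul_le_mul h1 h2 (by positivity) (le_trans (by positivity) h1)
      have : ε * C * Real.exp (-K) * (ρ s ^ 2)⁻¹ = ε * C * (Real.exp (-K) / ρ s ^ 2) := by
        ring
      linarith [h3, this ▸ le_refl (ε * C * Real.exp (-K) * (ρ s ^ 2)⁻¹)]
  have hΦ0 : 0 ≤ Φ 0 := by
    have h0I : (0:ℝ) ∈ Ico (0:ℝ) T := ⟨le_refl 0, hT⟩
    have : J 0 = 0 := by simp [hJdef]
    rw [hΦdef]
    simp only [this, mul_zero, sub_zero, hFdef]
    have := hρ_pos 0 h0I; positivity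
  have hΦt : Φ 0 ≤ Φ t := hΦmono ⟨le_refl 0, ht0⟩ ⟨ht0, le_refl t⟩ ht0
  have hFt : ε * C * Real.exp (-K) * J t ≤ F t := by
    have := le_trans hΦ0 hΦt
    rw [hΦdef] at this; simp only at this; linarith
  have hEt : E t = 1 := by simp [hEdef]
  have hρt := hρ_pos t ⟨ht0, htT⟩
  have hFt' : F t = G₁ t / ρ t ^ 2 := by rw [hFdef]; simp only [hEt, mul_one]
  have hJeq : J t = ∫ s in (0:ℝ)..t, (ρ s) ^ (-2:ℤ) := by
    rw [hJdef]
    apply intervalIntegral.integral_congr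
    intro x hx
    show (ρ x ^ 2)⁻¹ = ρ x ^ (-2:ℤ)
    rw [zpow_neg]; norm_cast
  rw [ge_iff_le, ← hJeq]
  calc ε * C * Real.exp (-K) * ρ t ^ 2 * J t
      = (ε * C * Real.exp (-K) * J t) * ρ t ^ 2 := by ring
    _ ≤ F t * ρ t ^ 2 := by
        apply mul_le_mul_of_nonneg_right hFt (by positivity)
    _ = G₁ t := by rw [hFt']; field_simp
end
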